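/- Let M = (μ₁,…,μₙ) have strictly positive integer components, m ∈ ℝ, δ ∈ [0,1], κ > 0, and let a(x,ξ) ∈ S^m_{M,δ,κ} satisfy supp a(·,ξ) ⊆ 𝒦 for all ξ ∈ ℝⁿ, for some compact 𝒦 ⊂ ℝⁿ. Denote by â(η,ξ) the partial Fourier transform of a(x,ξ) with respect to x. Then for every integer N ≥ 0 and every multi-index α there exists C_{α,N,𝒦} > 0 such that for all (η,ξ) ∈ ℝ^{2n}: ⟨η⟩_M^N |∂^α_ξ â(η,ξ)| ≤ C_{α,N,𝒦}⟨ξ⟩_M^{m−⟨α,1/M⟩+δ(N−κ)₊} if N ≠ κ, and ⟨η⟩_M^N |∂^α_ξ â(η,ξ)| ≤ C_{α,N,𝒦}⟨ξ⟩_M^{m−⟨α,1/M⟩}·log(1+⟨ξ⟩_M^δ) if N = κ. -/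

import Mathlib

noncomputable section

open MeasureTheory Complex SchwartzMap Function Real
open scoped ENNReal FourierTransform RealInnerProductSpace BigOperators Classical

namespace FLpaper

abbrev Rn (n : ℕ) := EuclideanSpace ℝ (Fin n)

variable {n : ℕ}

/-- the `M`-norm `|ξ|_M` -/
def Mnorm (M : Fin n → ℝ) (ξ : Rn n) : ℝ :=
  Real.sqrt (∑ j, |ξ j| ^ (2 * M j))

/-- the `M`-weight `⟨ξ⟩_M` -/
def Mw (M : Fin n → ℝ) (ξ : Rn n) : ℝ :=
  Real.sqrt (1 + (Mnorm M ξ) ^ (2:ℕ))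

/-- the standard weight `⟨ξ⟩` -/
def jap (ξ : Rn n) : ℝ := Real.sqrt (1 + ‖ξ‖ ^ (2:ℕ))

/-- `⟨α, 1/M⟩`, the `M`-order of the multi-index `α` -/
def Mord (M : Fin n → ℝ) (α : Fin n → ℕ) : ℝ := ∑ j, (α j : ℝ) / M j

/-- `μ_*`, the minimum order -/
def mumin (M : Fin n → ℝ) : ℝ := ⨅ j, M j

/-- `μ^*`, the maximum order -/
def mumax (M : Fin n → ℝ) : ℝ := ⨆ j, M j

/-- the anisotropic dilation `t^{1/M} ξ` -/
def Mdil (M : Fin n → ℝ) (t : ℝ) (ξ : Rn n) : Rn n :=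
  (EuclideanSpace.equiv (Fin n) ℝ).symm fun j => t ^ (1 / M j) * ξ j

/-- `Γ` is an `M`-conic set -/
def IsMConic (M : Fin n → ℝ) (Γ : Set (Rn n)) : Prop :=
  ∀ ξ ∈ Γ, ∀ t : ℝ, 0 < t → Mdil M t ξ ∈ Γ

/-- first order partial derivative in the `j`-th coordinate -/
def pd (j : Fin n) (f : Rn n → ℂ) : Rn n → ℂ :=
  fun x => fderiv ℝ f x (EuclideanSpace.single j 1)

/-- the multi-index derivative `∂^α` -/
def mder (α : Fin n → ℕ) (f : Rn n → ℂ) : Rn n → ℂ :=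
  (List.finRange n).foldr (fun j g => (pd j)^[α j] g) f

/-- `∂^α_ξ ∂^β_x a(x,ξ)` for a symbol `a` -/
def sder (α β : Fin n → ℕ) (a : Rn n → Rn n → ℂ) : Rn n → Rn n → ℂ :=
  fun x ξ => mder α (fun ζ => mder β (fun y => a y ζ) x) ξ

/-- smoothness of a symbol on `ℝ^{2n}` -/
def SmoothSymb (a : Rn n → Rn n → ℂ) : Prop :=
  ContDiff ℝ (⊤ : ℕ∞) fun p : Rn n × Rn n => a p.1 p.2

/-- the symbol class `S^m_{M,δ}` -/
def SM (M : Fin n → ℝ) (m δ : ℝ) (a : Rn n → Rn n → ℂ) : Prop :=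
  SmoothSymb a ∧ ∀ α β : Fin n → ℕ, ∃ C > 0, ∀ x ξ,
    ‖sder α β a x ξ‖ ≤ C * Mw M ξ ^ (m - Mord M α + δ * Mord M β)

/-- the symbol class `S^m_{M,δ,κ}` -/
def SMk (M : Fin n → ℝ) (m δ κ : ℝ) (a : Rn n → Rn n → ℂ) : Prop :=
  SmoothSymb a ∧ ∀ α β : Fin n → ℕ, ∃ C > 0, ∀ x ξ,
    (Mord M β ≠ κ → ‖sder α β a x ξ‖ ≤
        C * Mw M ξ ^ (m - Mord M α + δ * max (Mord M β - κ) 0)) ∧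
    (Mord M β = κ → ‖sder α β a x ξ‖ ≤
        C * Mw M ξ ^ (m - Mord M α) * Real.log (1 + Mw M ξ ^ δ))

/-- the regularizing class `S^{-∞}` -/
def Sminf (a : Rn n → Rn n → ℂ) : Prop :=
  SmoothSymb a ∧ ∀ μ : ℝ, 0 < μ → ∀ α β : Fin n → ℕ, ∃ C > 0, ∀ x ξ,
    ‖sder α β a x ξ‖ ≤ C * jap ξ ^ (-μ)

/-- the pseudodifferential operator `a(x,D)u` (Kohn-Nirenberg quantization,
with the Fourier normalization of Mathlib) -/
def psdo (a : Rn n → Rn n → ℂ) (u : Rn n → ℂ) : Rn n → ℂ :=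
  fun x => 𝓕⁻ (fun ξ => a x ξ * 𝓕 u ξ) x

/-- a Fourier multiplier `σ(D)u` -/
def fmul (σ : Rn n → ℂ) (u : Rn n → ℂ) : Rn n → ℂ :=
  fun x => 𝓕⁻ (fun ξ => σ ξ * 𝓕 u ξ) x

/-- the Fourier-Lebesgue norm `‖u‖_{FL^p_{s,M}}` of a function -/
def FLn (M : Fin n → ℝ) (s : ℝ) (p : ℝ≥0∞) (f : Rn n → ℂ) : ℝ≥0∞ :=
  eLpNorm (fun ξ => Mw M ξ ^ s • 𝓕 f ξ) p volume

/-- tempered distributions -/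
abbrev TD (n : ℕ) := 𝓢(Rn n, ℂ) →L[ℝ] ℂ

/-- Fourier transform of a tempered distribution -/
def fourierTD (u : TD n) : TD n :=
  u.comp ((fourierTransformCLM ℂ (E := ℂ) (V := Rn n)).restrictScalars ℝ)

/-- multiplication of a Schwartz function by a fixed temperate-growth function -/
def mulS (φ : Rn n → ℂ) (hφ : HasTemperateGrowth φ) : 𝓢(Rn n, ℂ) →L[ℝ] 𝓢(Rn n, ℂ) :=
  SchwartzMap.bilinLeftCLM (ContinuousLinearMap.mul ℝ ℂ) hφ

/-- multiplication of a tempered distribution by a temperate-growth function -/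
def mulTD (φ : Rn n → ℂ) (hφ : HasTemperateGrowth φ) (u : TD n) : TD n :=
  u.comp (mulS φ hφ)

/-- the Fourier transform of `u` is (represented by) the function `g` -/
def HasFT (u : TD n) (g : Rn n → ℂ) : Prop :=
  ∀ w : 𝓢(Rn n, ℂ), fourierTD u w = ∫ ξ, g ξ * w ξ

/-- `u ∈ FL^p_{s,M}` for a tempered distribution `u` -/
def MemFL (M : Fin n → ℝ) (s : ℝ) (p : ℝ≥0∞) (u : TD n) : Prop :=
  ∃ g : Rn n → ℂ, AEStronglyMeasurable g volume ∧ HasFT u g ∧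
    MemLp (fun ξ => Mw M ξ ^ s • g ξ) p volume

/-- `u ∈ FL^p_{s,M,loc}(x₀)` for a tempered distribution `u` -/
def MemFLloc (M : Fin n → ℝ) (s : ℝ) (p : ℝ≥0∞) (u : TD n) (x₀ : Rn n) : Prop :=
  ∃ (φ : Rn n → ℂ) (hφ : HasTemperateGrowth φ), HasCompactSupport φ ∧ φ x₀ ≠ 0 ∧
    MemFL M s p (mulTD φ hφ u)

/-- the symbol class `S^0_M` of symbols in the `ξ` variable only -/
def S0M (M : Fin n → ℝ) (ψ : Rn n → ℂ) : Prop :=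
  ContDiff ℝ (⊤ : ℕ∞) ψ ∧ ∀ α : Fin n → ℕ, ∃ C > 0, ∀ ξ, ‖mder α ψ ξ‖ ≤ C * Mw M ξ ^ (-(Mord M α))

/-- `u ∈ FL^p_{s,M,mcl}(x₀,ξ⁰)`, i.e. `(x₀,ξ⁰) ∉ WF_{FL^p_{s,M}}(u)`:
there are `φ ∈ C_0^∞` with `φ(x₀) ≠ 0` and `ψ ∈ S^0_M` with `ψ ≡ 1` on
`Γ_M ∩ {|ξ|_M > ε₀}` such that `ψ(D)(φu) ∈ FL^p_{s,M}`; the latter is expressed by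
saying that the Fourier transform of `φu` is a function `g` with `⟨·⟩^s_M ψ g ∈ L^p`. -/
def MemFLmcl (M : Fin n → ℝ) (s : ℝ) (p : ℝ≥0∞) (u : TD n) (x₀ ξ₀ : Rn n) : Prop :=
  ∃ (φ : Rn n → ℂ) (hφ : HasTemperateGrowth φ), HasCompactSupport φ ∧ φ x₀ ≠ 0 ∧
  ∃ ψ : Rn n → ℂ, S0M M ψ ∧
  ∃ Γ : Set (Rn n), IsMConic M Γ ∧ Γ ∈ nhds ξ₀ ∧
  ∃ ε₀ : ℝ, 0 < ε₀ ∧ ε₀ < Mnorm M ξ₀ ∧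
    (∀ ξ ∈ Γ, ε₀ < Mnorm M ξ → ψ ξ = 1) ∧
    ∃ g : Rn n → ℂ, AEStronglyMeasurable g volume ∧ HasFT (mulTD φ hφ u) g ∧
      MemLp (fun ξ => Mw M ξ ^ s • (ψ ξ * g ξ)) p volume

/-- the `FL^p_{s,M}` wave front set  -/
def WF (M : Fin n → ℝ) (s : ℝ) (p : ℝ≥0∞) (u : TD n) : Set (Rn n × Rn n) :=
  {z | z.2 ≠ 0 ∧ ¬ MemFLmcl M s p u z.1 z.2}

/-- microlocal `M`-ellipticity of a symbol at `(x₀, ξ⁰)` -/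
def MicroElliptic (M : Fin n → ℝ) (m : ℝ) (a : Rn n → Rn n → ℂ) (x₀ ξ₀ : Rn n) : Prop :=
  ∃ U ∈ nhds x₀, ∃ Γ : Set (Rn n), IsMConic M Γ ∧ Γ ∈ nhds ξ₀ ∧
    ∃ c₀ > (0:ℝ), ∃ ρ₀ > (0:ℝ), ∀ x ∈ U, ∀ ξ ∈ Γ, ρ₀ < Mnorm M ξ →
      c₀ * Mw M ξ ^ m ≤ ‖a x ξ‖

/-- the characteristic set of a symbol -/
def Char (M : Fin n → ℝ) (m : ℝ) (a : Rn n → Rn n → ℂ) : Set (Rn n × Rn n) :=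
  {z | z.2 ≠ 0 ∧ ¬ MicroElliptic M m a z.1 z.2}

/-- `v = a(x,D)u` in the sense of distributions: `⟨a(x,D)u, w⟩ = ⟨𝓕u, b_w⟩` where
`b_w(ξ) = ∫ e^{2πi x·ξ} a(x,ξ) w(x) dx`. -/
def IsPsdoApply (a : Rn n → Rn n → ℂ) (u v : TD n) : Prop :=
  ∃ B : 𝓢(Rn n, ℂ) → 𝓢(Rn n, ℂ),
    (∀ w ξ, B w ξ = 𝓕⁻ (fun x => a x ξ * w x) ξ) ∧
    ∀ w, v w = fourierTD u (B w)

/-- distributional partial derivative `∂_j u` -/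
def pdTD (j : Fin n) (u : TD n) : TD n :=
  -(u.comp (LineDeriv.lineDerivOpCLM ℝ 𝓢(Rn n, ℂ) (EuclideanSpace.single j (1:ℝ))))

/-- distributional multi-index derivative `∂^α u` -/
def mdTD (α : Fin n → ℕ) (u : TD n) : TD n :=
  (List.finRange n).foldr (fun j v => (pdTD j)^[α j] v) u

/-- `D^α u = (-i)^{|α|} ∂^α u` -/
def DTD (α : Fin n → ℕ) (u : TD n) : TD n :=
  (-Complex.I) ^ (∑ j, α j) • mdTD α u

/-- the symbol class `FL^p_{r,M} S^m_{M,δ}(N)` of symbols with Fourier-Lebesgue regularity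
in `x`; `q` is the conjugate exponent of `p`. -/
def FLS (M : Fin n → ℝ) (p q : ℝ≥0∞) (r m δ : ℝ) (N : ℕ) (a : Rn n → Rn n → ℂ) : Prop :=
  ∃ C > 0, ∀ α : Fin n → ℕ, (∑ j, α j) ≤ N →
    (∀ ξ, AEStronglyMeasurable (𝓕 fun x => mder α (a x) ξ) volume) ∧
    (∀ ξ, eLpNorm (𝓕 fun x => mder α (a x) ξ) 1 volume
        ≤ ENNReal.ofReal (C * Mw M ξ ^ (m - Mord M α))) ∧
    (∀ ξ, eLpNorm
        (fun η => Mw M η ^ r • 𝓕 (fun x => mder α (a x) ξ) η) p volume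
        ≤ ENNReal.ofReal
            (C * Mw M ξ ^ (m - Mord M α + δ * (r - n / (mumin M * q.toReal)))))

variable {𝒦 : Set (Rn n)} {G a : Rn n → Rn n → ℂ}

/-- a good family: jointly smooth, with `x`-support in `𝒦` -/
def Good (𝒦 : Set (Rn n)) (G : Rn n → Rn n → ℂ) : Prop :=
  ContDiff ℝ (⊤ : ℕ∞) (Function.uncurry G) ∧ ∀ ζ, Function.support (fun x => G x ζ) ⊆ 𝒦

variable {𝒦 : Set (Rn n)} {G a : Rn n → Rn n → ℂ}

lemma Good.slice2 (h : Good 𝒦 G) (x : Rn n) : ContDiff ℝ (⊤ : ℕ∞) (G x) :=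
  h.1.comp (contDiff_const.prodMk contDiff_id)

lemma Good.slice1 (h : Good 𝒦 G) (ζ : Rn n) : ContDiff ℝ (⊤ : ℕ∞) (fun y => G y ζ) :=
  h.1.comp (contDiff_id.prodMk contDiff_const)

lemma Good.zero_of_not_mem (h : Good 𝒦 G) {x : Rn n} (hx : x ∉ 𝒦) : G x = fun _ => (0:ℂ) :=
  funext fun ζ => by
    by_contra h0
    exact hx (h.2 ζ h0)

lemma contDiff_pd {f : Rn n → ℂ} (hf : ContDiff ℝ (⊤ : ℕ∞) f) (j : Fin n) : ContDiff ℝ (⊤ : ℕ∞) (pd j f) :=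
  (hf.fderiv_right (by simp)).clm_apply contDiff_const

lemma contDiff_pd_iter {f : Rn n → ℂ} (hf : ContDiff ℝ (⊤ : ℕ∞) f) (j : Fin n) (k : ℕ) :
    ContDiff ℝ (⊤ : ℕ∞) ((pd j)^[k] f) := by
  induction k with
  | zero => simpa using hf
  | succ k ih => rw [Function.iterate_succ_apply']; exact contDiff_pd ih j

lemma contDiff_foldr (α : Fin n → ℕ) (l : List (Fin n)) {f : Rn n → ℂ} (hf : ContDiff ℝ (⊤ : ℕ∞) f) :
    ContDiff ℝ (⊤ : ℕ∞) (l.foldr (fun j g => (pd j)^[α j] g) f) := by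
  induction l with
  | nil => simpa using hf
  | cons j l ih => exact contDiff_pd_iter ih j (α j)

lemma contDiff_mder (α : Fin n → ℕ) {f : Rn n → ℂ} (hf : ContDiff ℝ (⊤ : ℕ∞) f) :
    ContDiff ℝ (⊤ : ℕ∞) (mder α f) := contDiff_foldr α _ hf

lemma Good.pd2 (h : Good 𝒦 G) (j : Fin n) : Good 𝒦 (fun x ζ => pd j (G x) ζ) := by
  constructor
  · have h1 : ContDiff ℝ (⊤ : ℕ∞) (fun p : Rn n × Rn n => fderiv ℝ (G p.1) p.2) :=
      ContDiff.fderiv (f := fun (p : Rn n × Rn n) ζ => G p.1 ζ)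
        (h.1.comp ((contDiff_fst.fst).prodMk contDiff_snd)) contDiff_snd (by simp)
    exact h1.clm_apply contDiff_const
  · intro ζ x hx
    by_contra hxK
    apply hx
    show pd j (G x) ζ = 0
    rw [pd, h.zero_of_not_mem hxK]
    simp

lemma Good.pd1 (h : Good 𝒦 G) (h𝒦 : IsClosed 𝒦) (j : Fin n) :
    Good 𝒦 (fun x ζ => pd j (fun y => G y ζ) x) := by
  constructor
  · have h1 : ContDiff ℝ (⊤ : ℕ∞) (fun p : Rn n × Rn n => fderiv ℝ (fun y => G y p.2) p.1) :=
      ContDiff.fderiv (f := fun (p : Rn n × Rn n) y => G y p.2)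
        (h.1.comp (contDiff_snd.prodMk (contDiff_fst.snd))) contDiff_fst (by simp)
    exact h1.clm_apply contDiff_const
  · intro ζ x hx
    by_contra hxK
    apply hx
    show pd j (fun y => G y ζ) x = 0
    have hev : (fun y => G y ζ) =ᶠ[nhds x] (fun _ => (0:ℂ)) := by
      filter_upwards [h𝒦.isOpen_compl.mem_nhds hxK] with y hy
      by_contra h0
      exact hy (h.2 ζ h0)
    rw [pd, hev.fderiv_eq]
    simp

lemma Good.iter2 (h : Good 𝒦 G) (j : Fin n) (k : ℕ) :
    Good 𝒦 (fun x ζ => (pd j)^[k] (G x) ζ) := by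
  induction k with
  | zero => simpa using h
  | succ k ih =>
    have := ih.pd2 j
    simpa only [Function.iterate_succ_apply'] using this

lemma Good.iter1 (h : Good 𝒦 G) (h𝒦 : IsClosed 𝒦) (j : Fin n) (k : ℕ) :
    Good 𝒦 (fun x ζ => (pd j)^[k] (fun y => G y ζ) x) := by
  induction k with
  | zero => simpa using h
  | succ k ih =>
    have := ih.pd1 h𝒦 j
    simpa only [Function.iterate_succ_apply'] using this

lemma Good.foldr2 (h : Good 𝒦 G) (α : Fin n → ℕ) (l : List (Fin n)) :
    Good 𝒦 (fun x ζ => (l.foldr (fun j g => (pd j)^[α j] g) (G x)) ζ) := by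
  induction l with
  | nil => simpa using h
  | cons j l ih => simpa only [List.foldr_cons] using ih.iter2 j (α j)

lemma Good.foldr1 (h : Good 𝒦 G) (h𝒦 : IsClosed 𝒦) (α : Fin n → ℕ) (l : List (Fin n)) :
    Good 𝒦 (fun x ζ => (l.foldr (fun j g => (pd j)^[α j] g) (fun y => G y ζ)) x) := by
  induction l with
  | nil => simpa using h
  | cons j l ih => simpa only [List.foldr_cons] using ih.iter1 h𝒦 j (α j)

lemma Good.mder2 (h : Good 𝒦 G) (α : Fin n → ℕ) :
    Good 𝒦 (fun x ζ => mder α (G x) ζ) := h.foldr2 α _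

lemma Good.mder1 (h : Good 𝒦 G) (h𝒦 : IsClosed 𝒦) (α : Fin n → ℕ) :
    Good 𝒦 (fun x ζ => mder α (fun y => G y ζ) x) := h.foldr1 h𝒦 α _

lemma Good.sder (h : Good 𝒦 a) (h𝒦 : IsClosed 𝒦) (α β : Fin n → ℕ) :
    Good 𝒦 (fun x ξ => sder α β a x ξ) := (h.mder1 h𝒦 β).mder2 α

-- new material
lemma pd_const_mul {f : Rn n → ℂ} (hf : ContDiff ℝ (⊤ : ℕ∞) f) (z : ℂ) (j : Fin n) :
    pd j (fun ζ => z * f ζ) = fun ξ => z * pd j f ξ := by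
  funext ξ
  show fderiv ℝ (fun ζ => z * f ζ) ξ _ = z * fderiv ℝ f ξ _
  rw [fderiv_const_mul ((hf.differentiable (by simp)) ξ) z]
  simp

lemma iter_const_mul {f : Rn n → ℂ} (hf : ContDiff ℝ (⊤ : ℕ∞) f) (z : ℂ) (j : Fin n) (k : ℕ) :
    (pd j)^[k] (fun ζ => z * f ζ) = fun ξ => z * (pd j)^[k] f ξ := by
  induction k with
  | zero => rfl
  | succ k ih =>
    rw [Function.iterate_succ_apply', Function.iterate_succ_apply', ih]
    exact pd_const_mul (contDiff_pd_iter hf j k) z j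

lemma foldr_const_mul (α : Fin n → ℕ) (l : List (Fin n)) {f : Rn n → ℂ}
    (hf : ContDiff ℝ (⊤ : ℕ∞) f) (z : ℂ) :
    l.foldr (fun j g => (pd j)^[α j] g) (fun ζ => z * f ζ)
      = fun ξ => z * (l.foldr (fun j g => (pd j)^[α j] g) f) ξ := by
  induction l with
  | nil => rfl
  | cons j l ih =>
    rw [List.foldr_cons, List.foldr_cons, ih]
    exact iter_const_mul (contDiff_foldr α l hf) z j (α j)

lemma mder_const_mul (α : Fin n → ℕ) {f : Rn n → ℂ} (hf : ContDiff ℝ (⊤ : ℕ∞) f) (z : ℂ) :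
    mder α (fun ζ => z * f ζ) = fun ξ => z * mder α f ξ :=
  foldr_const_mul α _ hf z

lemma foldr_count (j : Fin n) (k : ℕ) (f : Rn n → ℂ) (l : List (Fin n)) :
    l.foldr (fun i g => (pd i)^[(Pi.single j k : Fin n → ℕ) i] g) f = (pd j)^[k * l.count j] f := by
  induction l with
  | nil => simp
  | cons i l ih =>
    rw [List.foldr_cons, ih]
    by_cases h : i = j
    · subst h
      rw [List.count_cons_self, Pi.single_eq_same, mul_add, mul_one, add_comm,
        Function.iterate_add_apply]
    · rw [Pi.single_eq_of_ne h, List.count_cons_of_ne h]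
      simp

lemma mder_single (j : Fin n) (k : ℕ) (f : Rn n → ℂ) :
    mder (Pi.single j k) f = (pd j)^[k] f := by
  rw [mder, foldr_count, List.count_eq_one_of_mem (List.nodup_finRange n) (List.mem_finRange j),
    mul_one]

lemma hcs_of_support (h𝒦 : IsCompact 𝒦) {f : Rn n → ℂ} (hs : Function.support f ⊆ 𝒦) :
    HasCompactSupport f :=
  HasCompactSupport.intro h𝒦 fun x hx => by
    by_contra h0
    exact hx (hs h0)

lemma pd_integral (h𝒦 : IsCompact 𝒦) (hG : Good 𝒦 G) (j : Fin n) (ξ : Rn n) :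
    pd j (fun ζ => ∫ x, G x ζ) ξ = ∫ x, pd j (G x) ξ := by
  have hfd : ContDiff ℝ (⊤ : ℕ∞) (fun p : Rn n × Rn n => fderiv ℝ (G p.1) p.2) :=
    ContDiff.fderiv (f := fun (p : Rn n × Rn n) ζ => G p.1 ζ)
      (hG.1.comp ((contDiff_fst.fst).prodMk contDiff_snd)) contDiff_snd (by simp)
  have hfdc : Continuous (fun p : Rn n × Rn n => fderiv ℝ (G p.1) p.2) := hfd.continuous
  obtain ⟨D, hD⟩ := (h𝒦.prod (isCompact_closedBall ξ 1)).exists_bound_of_continuousOn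
    (hfdc.continuousOn (s := 𝒦 ×ˢ Metric.closedBall ξ 1))
  set D' := max D 0 with hD'
  have hbd : ∀ x ∈ 𝒦, ∀ ζ ∈ Metric.closedBall ξ 1, ‖fderiv ℝ (G x) ζ‖ ≤ D' := by
    intro x hx ζ hζ
    exact le_max_of_le_left (hD (x, ζ) (Set.mk_mem_prod hx hζ))
  have hmeas : ∀ᶠ ζ' in nhds ξ, AEStronglyMeasurable (fun x => G x ζ') volume :=
    Filter.Eventually.of_forall fun ζ' => (hG.slice1 ζ').continuous.aestronglyMeasurable
  have hint : Integrable (fun x => G x ξ) volume :=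
    (hG.slice1 ξ).continuous.integrable_of_hasCompactSupport
      (hcs_of_support h𝒦 (hG.2 ξ))
  have hmeas' : AEStronglyMeasurable (fun x => fderiv ℝ (G x) ξ) volume :=
    (hfdc.comp (continuous_id.prodMk continuous_const)).aestronglyMeasurable
  have hbound : ∀ᵐ x ∂(volume : Measure (Rn n)), ∀ ζ ∈ Metric.ball ξ 1,
      ‖fderiv ℝ (G x) ζ‖ ≤ 𝒦.indicator (fun _ => D') x := by
    refine MeasureTheory.ae_of_all _ fun x ζ hζ => ?_
    by_cases hx : x ∈ 𝒦
    · rw [Set.indicator_of_mem hx]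
      exact hbd x hx ζ (Metric.ball_subset_closedBall hζ)
    · rw [Set.indicator_of_notMem hx, hG.zero_of_not_mem hx]
      simp
  have hbint : Integrable (𝒦.indicator (fun _ => D')) volume :=
    (MeasureTheory.integrableOn_const h𝒦.measure_lt_top.ne).integrable_indicator
      h𝒦.isClosed.measurableSet
  have hdiff : ∀ᵐ x ∂(volume : Measure (Rn n)), ∀ ζ ∈ Metric.ball ξ 1,
      HasFDerivAt (fun ζ' => G x ζ') (fderiv ℝ (G x) ζ) ζ :=
    MeasureTheory.ae_of_all _ fun x ζ _ =>
      (((hG.slice2 x).differentiable (by simp)) ζ).hasFDerivAt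
  have key := hasFDerivAt_integral_of_dominated_of_fderiv_le
    (F := fun ζ x => G x ζ) (F' := fun ζ x => fderiv ℝ (G x) ζ)
    (x₀ := ξ) (bound := 𝒦.indicator fun _ => D') (Metric.ball_mem_nhds ξ one_pos) hmeas hint hmeas' hbound hbint hdiff
  have hint' : Integrable (fun x => fderiv ℝ (G x) ξ) volume := by
    refine (hfdc.comp (continuous_id.prodMk continuous_const)).integrable_of_hasCompactSupport
      (HasCompactSupport.intro h𝒦 fun x hx => ?_)
    show fderiv ℝ (G x) ξ = 0
    rw [hG.zero_of_not_mem hx]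
    simp
  show fderiv ℝ (fun ζ => ∫ x, G x ζ) ξ _ = _
  rw [key.fderiv, ContinuousLinearMap.integral_apply hint']
  rfl

lemma iter_pd_integral (h𝒦 : IsCompact 𝒦) (hG : Good 𝒦 G) (j : Fin n) (k : ℕ) :
    ∀ ξ, (pd j)^[k] (fun ζ => ∫ x, G x ζ) ξ = ∫ x, (pd j)^[k] (G x) ξ := by
  induction k with
  | zero => intro ξ; simp
  | succ k ih =>
    intro ξ
    have hGk : Good 𝒦 (fun x ζ => (pd j)^[k] (G x) ζ) := hG.iter2 j k
    have h1 : (pd j)^[k] (fun ζ => ∫ x, G x ζ) = fun ζ => ∫ x, (pd j)^[k] (G x) ζ := funext ih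
    rw [Function.iterate_succ_apply', h1, pd_integral h𝒦 hGk j ξ]
    simp only [Function.iterate_succ_apply']

lemma foldr_integral (h𝒦 : IsCompact 𝒦) (hG : Good 𝒦 G) (α : Fin n → ℕ) (l : List (Fin n)) :
    ∀ ξ, (l.foldr (fun j g => (pd j)^[α j] g) (fun ζ => ∫ x, G x ζ)) ξ
      = ∫ x, (l.foldr (fun j g => (pd j)^[α j] g) (G x)) ξ := by
  induction l with
  | nil => intro ξ; rfl
  | cons j l ih =>
    intro ξ
    have hGl : Good 𝒦 (fun x ζ => (l.foldr (fun j g => (pd j)^[α j] g) (G x)) ζ) :=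
      hG.foldr2 α l
    rw [List.foldr_cons, funext ih, iter_pd_integral h𝒦 hGl j (α j) ξ]
    simp only [List.foldr_cons]

lemma mder_integral (h𝒦 : IsCompact 𝒦) (hG : Good 𝒦 G) (α : Fin n → ℕ) (ξ : Rn n) :
    mder α (fun ζ => ∫ x, G x ζ) ξ = ∫ x, mder α (G x) ξ :=
  foldr_integral h𝒦 hG α (List.finRange n) ξ

lemma support_pd (h𝒦 : IsClosed 𝒦) {f : Rn n → ℂ} (hs : Function.support f ⊆ 𝒦) (j : Fin n) :
    Function.support (pd j f) ⊆ 𝒦 := by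
  intro x hx
  by_contra hxK
  apply hx
  show pd j f x = 0
  have hev : f =ᶠ[nhds x] (fun _ => (0:ℂ)) := by
    filter_upwards [h𝒦.isOpen_compl.mem_nhds hxK] with y hy
    by_contra h0
    exact hy (hs h0)
  rw [pd, hev.fderiv_eq]
  simp

lemma support_pd_iter (h𝒦 : IsClosed 𝒦) {f : Rn n → ℂ} (hs : Function.support f ⊆ 𝒦)
    (j : Fin n) (k : ℕ) : Function.support ((pd j)^[k] f) ⊆ 𝒦 := by
  induction k with
  | zero => simpa using hs
  | succ k ih => rw [Function.iterate_succ_apply']; exact support_pd h𝒦 ih j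

lemma fourier_pd (h𝒦 : IsCompact 𝒦) {f : Rn n → ℂ} (hf : ContDiff ℝ (⊤ : ℕ∞) f)
    (hs : Function.support f ⊆ 𝒦) (j : Fin n) (η : Rn n) :
    𝓕 (pd j f) η
      = (2 * π * Complex.I * (η j : ℂ)) * 𝓕 f η := by
  have hcs : HasCompactSupport f := hcs_of_support h𝒦 hs
  have hint : Integrable f := hf.continuous.integrable_of_hasCompactSupport hcs
  have hdiff : Differentiable ℝ f := hf.differentiable (by simp)
  have hfd_int : Integrable (fderiv ℝ f) :=
    ((hf.fderiv_right (m := (⊤ : ℕ∞)) (by simp)).continuous).integrable_of_hasCompactSupport (hcs.fderiv ℝ)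
  have h1 : 𝓕 (pd j f) η
      = 𝓕 (fderiv ℝ f) η (EuclideanSpace.single j 1) :=
    (Real.fourier_continuousLinearMap_apply hfd_int).symm
  rw [h1, Real.fourier_fderiv hint hdiff hfd_int,
    VectorFourier.fourierSMulRight_apply]
  have h2 : ((-innerSL ℝ) η) (EuclideanSpace.single j (1:ℝ)) = -(η j) := by
    simp [EuclideanSpace.inner_single_right]
  rw [h2]
  simp only [neg_smul, smul_neg, neg_neg, smul_eq_mul, real_smul, Complex.ofReal_mul]
  push_cast
  ring

lemma fourier_pd_iter (h𝒦 : IsCompact 𝒦) {f : Rn n → ℂ} (hf : ContDiff ℝ (⊤ : ℕ∞) f)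
    (hs : Function.support f ⊆ 𝒦) (j : Fin n) (k : ℕ) (η : Rn n) :
    𝓕 ((pd j)^[k] f) η
      = (2 * π * Complex.I * (η j : ℂ)) ^ k * 𝓕 f η := by
  induction k with
  | zero => simp
  | succ k ih =>
    rw [Function.iterate_succ_apply',
      fourier_pd h𝒦 (contDiff_pd_iter hf j k) (support_pd_iter h𝒦.isClosed hs j k) j η, ih,
      pow_succ]
    ring

lemma fourier_const_mul (f : Rn n → ℂ) (c : ℂ) (η : Rn n) :
    𝓕 (fun x => c * f x) η = c * 𝓕 f η := by
  rw [Real.fourier_eq, Real.fourier_eq, ← integral_const_mul]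
  congr 1
  funext x
  simp only [Circle.smul_def, smul_eq_mul]
  ring

lemma contDiff_char (η : Rn n) :
    ContDiff ℝ (⊤ : ℕ∞) (fun x : Rn n => ((𝐞 (-⟪x, η⟫) : Circle) : ℂ)) := by
  have h1 : (fun x : Rn n => ((𝐞 (-⟪x, η⟫) : Circle) : ℂ))
      = fun x => Complex.exp ((2 * π * (-⟪x, η⟫) : ℝ) * Complex.I) := by
    funext x
    rw [Real.fourierChar_apply]
  rw [h1]
  apply Complex.contDiff_exp.comp
  have h2 : ContDiff ℝ (⊤ : ℕ∞) (fun x : Rn n => (2 * π * (-⟪x, η⟫) : ℝ)) :=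
    contDiff_const.mul (contDiff_id.inner ℝ contDiff_const).neg
  exact (Complex.ofRealCLM.contDiff.comp h2).mul contDiff_const

lemma mder_fourier (h𝒦 : IsCompact 𝒦) {F : Rn n → Rn n → ℂ} (hF : Good 𝒦 F)
    (α : Fin n → ℕ) (η ξ : Rn n) :
    mder α (fun ζ => 𝓕 (fun x => F x ζ) η) ξ
      = 𝓕 (fun x => mder α (F x) ξ) η := by
  set FF : Rn n → Rn n → ℂ := fun x ζ => ((𝐞 (-⟪x, η⟫) : Circle) : ℂ) * F x ζ with hFFdef
  have hFF : Good 𝒦 FF := by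
    constructor
    · exact ((contDiff_char η).comp contDiff_fst).mul hF.1
    · intro ζ x hx
      refine hF.2 ζ ?_
      simp only [Function.mem_support] at hx ⊢
      intro h0
      apply hx
      show ((𝐞 (-⟪x, η⟫) : Circle) : ℂ) * F x ζ = 0
      rw [h0, mul_zero]
  have h1 : (fun ζ => 𝓕 (fun x => F x ζ) η) = fun ζ => ∫ x, FF x ζ := by
    funext ζ
    rw [Real.fourier_eq]
    exact congrArg (fun g : Rn n → ℂ => ∫ x, g x)
      (funext fun x => by simp [FF, Circle.smul_def])
  have h3 : (fun x => mder α (FF x) ξ)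
      = fun x => (𝐞 (-⟪x, η⟫) : Circle) • mder α (F x) ξ := funext fun x => by
    have h2 := congrFun (mder_const_mul α (hF.slice2 x) ((𝐞 (-⟪x, η⟫) : Circle) : ℂ)) ξ
    simpa [Circle.smul_def] using h2
  rw [h1, mder_integral h𝒦 hFF α ξ, Real.fourier_eq, h3]

lemma key_identity (h𝒦 : IsCompact 𝒦) (hG : Good 𝒦 a) (α : Fin n → ℕ) (j : Fin n) (k : ℕ)
    (η ξ : Rn n) :
    𝓕 (fun x => sder α (Pi.single j k) a x ξ) η
      = (2 * π * Complex.I * (η j : ℂ)) ^ k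
        * mder α (fun ζ => 𝓕 (fun x => a x ζ) η) ξ := by
  set c : ℂ := (2 * π * Complex.I * (η j : ℂ)) ^ k with hc
  set B : Rn n → Rn n → ℂ := fun x ζ => (pd j)^[k] (fun y => a y ζ) x with hB
  have hBG : Good 𝒦 B := hG.iter1 h𝒦.isClosed j k
  have h2 : (fun x => sder α (Pi.single j k) a x ξ) = fun x => mder α (B x) ξ := by
    funext x
    show mder α (fun ζ => mder (Pi.single j k) (fun y => a y ζ) x) ξ = _
    congr 1
    funext ζ
    rw [mder_single]
  rw [h2, ← mder_fourier h𝒦 hBG α η ξ]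
  have h1 : ∀ ζ, 𝓕 (fun x => B x ζ) η
      = c * 𝓕 (fun x => a x ζ) η := fun ζ =>
    fourier_pd_iter h𝒦 (hG.slice1 ζ) (hG.2 ζ) j k η
  have hGc : Good 𝒦 (fun x ζ => c * a x ζ) := by
    constructor
    · exact contDiff_const.mul hG.1
    · intro ζ x hx
      refine hG.2 ζ ?_
      simp only [Function.mem_support] at hx ⊢
      intro h0
      exact hx (by rw [h0, mul_zero])
  have h3 : (fun ζ => 𝓕 (fun x => B x ζ) η)
      = fun ζ => 𝓕 (fun x => c * a x ζ) η := by
    funext ζ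
    rw [h1 ζ, fourier_const_mul]
  rw [h3, mder_fourier h𝒦 hGc α η ξ]
  have h4 : (fun x => mder α (fun ζ => c * a x ζ) ξ) = fun x => c * mder α (a x) ξ :=
    funext fun x => congrFun (mder_const_mul α (hG.slice2 x) c) ξ
  rw [h4, fourier_const_mul, ← mder_fourier h𝒦 hG α η ξ]

lemma norm_fourier_le (h𝒦 : IsCompact 𝒦) {g : Rn n → ℂ} (hg : Continuous g)
    (hs : Function.support g ⊆ 𝒦) {D : ℝ} (hD : ∀ x, ‖g x‖ ≤ D) (η : Rn n) :
    ‖𝓕 g η‖ ≤ (volume 𝒦).toReal * D := by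
  have hint : Integrable g := hg.integrable_of_hasCompactSupport (hcs_of_support h𝒦 hs)
  have h1 : ‖𝓕 g η‖ ≤ ∫ x, ‖g x‖ :=
    VectorFourier.norm_fourierIntegral_le_integral_norm _ _ _ _ _
  refine h1.trans ?_
  have hD0 : 0 ≤ D := (norm_nonneg _).trans (hD 0)
  have hbint : Integrable (𝒦.indicator (fun _ => D)) volume :=
    (MeasureTheory.integrableOn_const h𝒦.measure_lt_top.ne).integrable_indicator
      h𝒦.isClosed.measurableSet
  have h2 : ∫ x, ‖g x‖ ≤ ∫ x, 𝒦.indicator (fun _ => D) x := by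
    refine integral_mono hint.norm hbint fun x => ?_
    by_cases hx : x ∈ 𝒦
    · rw [Set.indicator_of_mem hx]; exact hD x
    · rw [Set.indicator_of_notMem hx]
      have : g x = 0 := by
        by_contra h0
        exact hx (hs h0)
      simp [this]
  refine h2.trans ?_
  rw [integral_indicator_const D h𝒦.isClosed.measurableSet]
  simp [smul_eq_mul, Measure.real]

lemma Mord_single (M : Fin n → ℝ) (j : Fin n) (r : ℕ) :
    Mord M (Pi.single j r) = (r : ℝ) / M j := by
  rw [Mord, Finset.sum_eq_single j]
  · rw [Pi.single_eq_same]
  · intro i _ hij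
    rw [Pi.single_eq_of_ne hij]
    simp
  · simp

lemma one_le_Mw (M : Fin n → ℝ) (ξ : Rn n) : 1 ≤ Mw M ξ := by
  rw [Mw]
  calc (1:ℝ) = Real.sqrt 1 := Real.sqrt_one.symm
    _ ≤ _ := Real.sqrt_le_sqrt (by nlinarith [sq_nonneg (Mnorm M ξ)])

lemma Mw_nonneg (M : Fin n → ℝ) (ξ : Rn n) : 0 ≤ Mw M ξ :=
  zero_le_one.trans (one_le_Mw M ξ)

lemma Mw_le (M : Fin n → ℝ) (η : Rn n) : Mw M η ≤ 1 + Mnorm M η := by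
  have h0 : 0 ≤ Mnorm M η := Real.sqrt_nonneg _
  rw [Mw]
  calc Real.sqrt (1 + Mnorm M η ^ (2:ℕ))
      ≤ Real.sqrt ((1 + Mnorm M η) ^ (2:ℕ)) := Real.sqrt_le_sqrt (by nlinarith)
    _ = 1 + Mnorm M η := by
        rw [show ((1 + Mnorm M η) ^ (2:ℕ)) = (1 + Mnorm M η)^2 from rfl, Real.sqrt_sq (by positivity)]

lemma Mnorm_le (M : Fin n → ℝ) (k : Fin n → ℕ) (hkM : ∀ j, M j = (k j : ℝ)) (η : Rn n) :
    Mnorm M η ≤ ∑ j, |η j| ^ (k j) := by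
  have hterm : ∀ j, |η j| ^ (2 * M j) = (|η j| ^ (k j)) ^ (2:ℕ) := fun j => by
    rw [hkM j, show (2 * (k j : ℝ)) = ((k j * 2 : ℕ) : ℝ) by push_cast; ring,
      Real.rpow_natCast, pow_mul]
  rw [Mnorm]
  calc Real.sqrt (∑ j, |η j| ^ (2 * M j))
      = Real.sqrt (∑ j, (|η j| ^ (k j)) ^ (2:ℕ)) := by rw [Finset.sum_congr rfl fun j _ => hterm j]
    _ ≤ Real.sqrt ((∑ j, |η j| ^ (k j)) ^ (2:ℕ)) :=
        Real.sqrt_le_sqrt (Finset.sum_sq_le_sq_sum_of_nonneg fun j _ => by positivity)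
    _ = ∑ j, |η j| ^ (k j) := Real.sqrt_sq (Finset.sum_nonneg fun j _ => by positivity)

lemma Mw_pow_le (hn : 0 < n) (M : Fin n → ℝ) (k : Fin n → ℕ) (hkM : ∀ j, M j = (k j : ℝ))
    (N : ℕ) (η : Rn n) :
    Mw M η ^ N ≤ 2 ^ N * (1 + (n : ℝ) ^ N * ∑ j, |η j| ^ (k j * N)) := by
  set S := ∑ j, |η j| ^ (k j) with hS
  have hS0 : 0 ≤ S := Finset.sum_nonneg fun j _ => by positivity
  have h1 : Mw M η ≤ 1 + S := (Mw_le M η).trans (by linarith [Mnorm_le M k hkM η])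
  have h2 : Mw M η ^ N ≤ (1 + S) ^ N := pow_le_pow_left₀ (Mw_nonneg M η) h1 N
  have hkey : S ^ N ≤ (n : ℝ) ^ N * ∑ j, |η j| ^ (k j * N) := by
    haveI : Nonempty (Fin n) := ⟨⟨0, hn⟩⟩
    obtain ⟨j₀, -, hj₀⟩ := Finset.exists_max_image Finset.univ (fun j => |η j| ^ (k j))
      Finset.univ_nonempty
    have hS_le : S ≤ (n : ℝ) * |η j₀| ^ (k j₀) := by
      calc S ≤ Finset.univ.card • (|η j₀| ^ (k j₀)) :=
            Finset.sum_le_card_nsmul _ _ _ fun j _ => hj₀ j (Finset.mem_univ j)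
        _ = (n : ℝ) * |η j₀| ^ (k j₀) := by
            simp [Finset.card_univ, nsmul_eq_mul]
    calc S ^ N ≤ ((n : ℝ) * |η j₀| ^ (k j₀)) ^ N := pow_le_pow_left₀ hS0 hS_le N
      _ = (n : ℝ) ^ N * |η j₀| ^ (k j₀ * N) := by rw [mul_pow, ← pow_mul]
      _ ≤ (n : ℝ) ^ N * ∑ j, |η j| ^ (k j * N) := by
          refine mul_le_mul_of_nonneg_left
            (Finset.single_le_sum (f := fun j => |η j| ^ (k j * N))
              (fun j _ => by positivity) (Finset.mem_univ j₀))
            (by positivity)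
  have h3 : (1 + S) ^ N ≤ 2 ^ N * (1 + S ^ N) := by
    have hSN : 0 ≤ S ^ N := pow_nonneg hS0 N
    rcases le_total S 1 with hs | hs
    · calc (1 + S) ^ N ≤ 2 ^ N := pow_le_pow_left₀ (by linarith) (by linarith) N
        _ ≤ 2 ^ N * (1 + S ^ N) := le_mul_of_one_le_right (by positivity) (by linarith)
    · calc (1 + S) ^ N ≤ (2 * S) ^ N := pow_le_pow_left₀ (by linarith) (by linarith) N
        _ = 2 ^ N * S ^ N := mul_pow 2 S N
        _ ≤ 2 ^ N * (1 + S ^ N) := by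
            refine mul_le_mul_of_nonneg_left (by linarith) (by positivity)
  calc Mw M η ^ N ≤ (1 + S) ^ N := h2
    _ ≤ 2 ^ N * (1 + S ^ N) := h3
    _ ≤ 2 ^ N * (1 + (n : ℝ) ^ N * ∑ j, |η j| ^ (k j * N)) := by
        refine mul_le_mul_of_nonneg_left (by linarith) (by positivity)

lemma machine (h𝒦 : IsCompact 𝒦) (hG : Good 𝒦 a) (α : Fin n → ℕ) (j : Fin n) (kk : ℕ)
    {D : ℝ} (ξ : Rn n) (hD : ∀ x, ‖sder α (Pi.single j kk) a x ξ‖ ≤ D) (η : Rn n) :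
    |η j| ^ kk * ‖mder α (fun ζ => 𝓕 (fun x => a x ζ) η) ξ‖
      ≤ max 1 (volume 𝒦).toReal * D := by
  have hD0 : 0 ≤ D := (norm_nonneg _).trans (hD 0)
  have hGs : Good 𝒦 (fun x ξ => sder α (Pi.single j kk) a x ξ) := hG.sder h𝒦.isClosed α _
  have h1 : ‖𝓕 (fun x => sder α (Pi.single j kk) a x ξ) η‖
      ≤ (volume 𝒦).toReal * D :=
    norm_fourier_le h𝒦 (hGs.slice1 ξ).continuous (hGs.2 ξ) hD η
  have h2 := key_identity h𝒦 hG α j kk η ξ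
  have h3 : ‖(2 * π * Complex.I * (η j : ℂ)) ^ kk‖ = (2 * π * |η j|) ^ kk := by
    rw [norm_pow]
    congr 1
    simp only [norm_mul, Complex.norm_ofNat, Complex.norm_real, Complex.norm_I, mul_one,
      Real.norm_eq_abs]
    rw [abs_of_pos Real.pi_pos]
  have hTnn : (0:ℝ) ≤ ‖mder α (fun ζ => 𝓕 (fun x => a x ζ) η) ξ‖ :=
    norm_nonneg _
  have h4 : |η j| ^ kk * ‖mder α (fun ζ => 𝓕 (fun x => a x ζ) η) ξ‖
      ≤ (2 * π * |η j|) ^ kk * ‖mder α (fun ζ => 𝓕 (fun x => a x ζ) η) ξ‖ := by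
    refine mul_le_mul_of_nonneg_right ?_ hTnn
    rw [mul_pow (2 * π) |η j| kk]
    have h2π : (1:ℝ) ≤ (2 * π) ^ kk :=
      one_le_pow₀ (by nlinarith [Real.pi_gt_three])
    nlinarith [pow_nonneg (abs_nonneg (η j)) kk]
  refine h4.trans ?_
  rw [← h3, ← norm_mul, ← h2]
  refine h1.trans ?_
  exact mul_le_mul_of_nonneg_right (le_max_right _ _) hD0


/-- Proposition: decay estimates for the partial Fourier transform
`â(η,ξ)` (in `x`) of a compactly `x`-supported symbol `a ∈ S^m_{M,δ,κ}`. -/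
theorem statement17 {n : ℕ} (hn : 0 < n) (M : Fin n → ℝ) (hM : ∀ j, 0 < M j)
    (hMint : ∀ j, ∃ k : ℕ, 0 < k ∧ M j = (k : ℝ))
    (m δ κ : ℝ) (hδ0 : 0 ≤ δ) (hδ1 : δ ≤ 1) (hκ : 0 < κ)
    (a : Rn n → Rn n → ℂ) (ha : SMk M m δ κ a)
    (𝒦 : Set (Rn n)) (h𝒦 : IsCompact 𝒦)
    (hsupp : ∀ ξ, Function.support (fun x => a x ξ) ⊆ 𝒦) :
    ∀ (N : ℕ) (α : Fin n → ℕ), ∃ C > (0:ℝ), ∀ η ξ : Rn n,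
      ((N : ℝ) ≠ κ →
        Mw M η ^ (N : ℝ) *
            ‖mder α (fun ζ => 𝓕 (fun x => a x ζ) η) ξ‖ ≤
          C * Mw M ξ ^ (m - Mord M α + δ * max ((N : ℝ) - κ) 0)) ∧
      ((N : ℝ) = κ →
        Mw M η ^ (N : ℝ) *
            ‖mder α (fun ζ => 𝓕 (fun x => a x ζ) η) ξ‖ ≤
          C * Mw M ξ ^ (m - Mord M α) * Real.log (1 + Mw M ξ ^ δ)) := by
  have hGood : Good 𝒦 a := ⟨ha.1, hsupp⟩
  choose k hk0 hkM using hMint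
  intro N α
  have hV1 : (1:ℝ) ≤ max 1 (volume 𝒦).toReal := le_max_left _ _
  have hV0 : (0:ℝ) < max 1 (volume 𝒦).toReal := lt_of_lt_of_le one_pos hV1
  have hMord : ∀ j : Fin n, Mord M (Pi.single j (k j * N)) = (N : ℝ) := by
    intro j
    rw [Mord_single, hkM j, Nat.cast_mul]
    exact mul_div_cancel_left₀ _ (Nat.cast_ne_zero.2 (hk0 j).ne')
  obtain ⟨C₀, hC₀pos, hC₀⟩ := ha.2 α (Pi.single (⟨0, hn⟩ : Fin n) 0)
  have hMord0 : Mord M (Pi.single (⟨0, hn⟩ : Fin n) 0) = 0 := by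
    rw [Mord_single]; simp
  have hC0bound : ∀ x ξ, ‖sder α (Pi.single (⟨0, hn⟩ : Fin n) 0) a x ξ‖
      ≤ C₀ * Mw M ξ ^ (m - Mord M α) := by
    intro x ξ
    have h := (hC₀ x ξ).1 (by rw [hMord0]; exact hκ.ne)
    rw [hMord0] at h
    have hmax : max (0 - κ) 0 = 0 := max_eq_right (by linarith)
    rw [hmax, mul_zero, add_zero] at h
    exact h
  by_cases hNκ : (N : ℝ) = κ
  · -- log case
    have hper : ∀ j : Fin n, ∃ C > (0:ℝ), ∀ η ξ : Rn n, |η j| ^ (k j * N) *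
        ‖mder α (fun ζ => 𝓕 (fun x => a x ζ) η) ξ‖
        ≤ max 1 (volume 𝒦).toReal *
          (C * (Mw M ξ ^ (m - Mord M α) * Real.log (1 + Mw M ξ ^ δ))) := by
      intro j
      obtain ⟨Cj, hCjpos, hCj⟩ := ha.2 α (Pi.single j (k j * N))
      refine ⟨Cj, hCjpos, fun η ξ => ?_⟩
      have hb : ∀ x, ‖sder α (Pi.single j (k j * N)) a x ξ‖
          ≤ Cj * (Mw M ξ ^ (m - Mord M α) * Real.log (1 + Mw M ξ ^ δ)) := by
        intro x
        have h := (hCj x ξ).2 (by rw [hMord j]; exact hNκ)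
        calc ‖sder α (Pi.single j (k j * N)) a x ξ‖
            ≤ Cj * Mw M ξ ^ (m - Mord M α) * Real.log (1 + Mw M ξ ^ δ) := h
          _ = Cj * (Mw M ξ ^ (m - Mord M α) * Real.log (1 + Mw M ξ ^ δ)) := by ring
      exact machine h𝒦 hGood α j (k j * N) ξ hb η
    choose Cj hCjpos hCjb using hper
    have hsumpos : (0:ℝ) ≤ ∑ j, Cj j := Finset.sum_nonneg fun j _ => (hCjpos j).le
    have hlog2 : (0:ℝ) < Real.log 2 := Real.log_pos (by norm_num)
    refine ⟨2 ^ N * (max 1 (volume 𝒦).toReal * C₀ / Real.log 2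
        + (n : ℝ) ^ N * (max 1 (volume 𝒦).toReal * ∑ j, Cj j)), by positivity,
      fun η ξ => ⟨fun h => absurd hNκ h, fun _ => ?_⟩⟩
    set T := ‖mder α (fun ζ => 𝓕 (fun x => a x ζ) η) ξ‖ with hTdef
    have hT0 : (0:ℝ) ≤ T := norm_nonneg _
    set W := Mw M ξ ^ (m - Mord M α) * Real.log (1 + Mw M ξ ^ δ) with hWdef
    have hwδ : (1:ℝ) ≤ Mw M ξ ^ δ := by
      have h := Real.rpow_le_rpow_of_exponent_le (one_le_Mw M ξ) hδ0
      simpa [Real.rpow_zero] using h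
    have hloglb : Real.log 2 ≤ Real.log (1 + Mw M ξ ^ δ) :=
      Real.log_le_log (by norm_num) (by linarith)
    have hrpow0 : (0:ℝ) ≤ Mw M ξ ^ (m - Mord M α) := Real.rpow_nonneg (Mw_nonneg M ξ) _
    have hW0 : (0:ℝ) ≤ W := by
      rw [hWdef]
      exact mul_nonneg hrpow0 (hlog2.le.trans hloglb)
    have hE0 : T ≤ max 1 (volume 𝒦).toReal * C₀ / Real.log 2 * W := by
      have h1 : T ≤ max 1 (volume 𝒦).toReal * (C₀ * Mw M ξ ^ (m - Mord M α)) := by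
        have h := machine h𝒦 hGood α (⟨0, hn⟩ : Fin n) 0 ξ (fun x => hC0bound x ξ) η
        simpa using h
      have h2 : max 1 (volume 𝒦).toReal * (C₀ * Mw M ξ ^ (m - Mord M α))
          = max 1 (volume 𝒦).toReal * C₀ / Real.log 2
            * (Mw M ξ ^ (m - Mord M α) * Real.log 2) := by
        field_simp
      refine h1.trans ?_
      rw [h2, hWdef]
      refine mul_le_mul_of_nonneg_left ?_ (by positivity)
      exact mul_le_mul_of_nonneg_left hloglb hrpow0
    have hEj : ∀ j : Fin n, |η j| ^ (k j * N) * T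
        ≤ max 1 (volume 𝒦).toReal * (Cj j * W) := fun j => hCjb j η ξ
    calc Mw M η ^ (N:ℝ) * T = Mw M η ^ N * T := by rw [Real.rpow_natCast]
      _ ≤ (2 ^ N * (1 + (n : ℝ) ^ N * ∑ j, |η j| ^ (k j * N))) * T :=
          mul_le_mul_of_nonneg_right (Mw_pow_le hn M k hkM N η) hT0
      _ = 2 ^ N * (T + (n : ℝ) ^ N * ∑ j, (|η j| ^ (k j * N) * T)) := by
          rw [← Finset.sum_mul]; ring
      _ ≤ 2 ^ N * (max 1 (volume 𝒦).toReal * C₀ / Real.log 2 * W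
          + (n : ℝ) ^ N * ∑ j, (max 1 (volume 𝒦).toReal * (Cj j * W))) := by
          refine mul_le_mul_of_nonneg_left ?_ (by positivity)
          exact add_le_add hE0 (mul_le_mul_of_nonneg_left
            (Finset.sum_le_sum fun j _ => hEj j) (by positivity))
      _ = 2 ^ N * (max 1 (volume 𝒦).toReal * C₀ / Real.log 2
          + (n : ℝ) ^ N * (max 1 (volume 𝒦).toReal * ∑ j, Cj j))
          * Mw M ξ ^ (m - Mord M α) * Real.log (1 + Mw M ξ ^ δ) := by
          have hsum2 : ∑ j, (max 1 (volume 𝒦).toReal * (Cj j * W))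
              = max 1 (volume 𝒦).toReal * ((∑ j, Cj j) * W) := by
            rw [← Finset.mul_sum, ← Finset.sum_mul]
          rw [hsum2, hWdef]
          ring
  · -- non-log case
    have hper : ∀ j : Fin n, ∃ C > (0:ℝ), ∀ η ξ : Rn n, |η j| ^ (k j * N) *
        ‖mder α (fun ζ => 𝓕 (fun x => a x ζ) η) ξ‖
        ≤ max 1 (volume 𝒦).toReal *
          (C * Mw M ξ ^ (m - Mord M α + δ * max ((N:ℝ) - κ) 0)) := by
      intro j
      obtain ⟨Cj, hCjpos, hCj⟩ := ha.2 α (Pi.single j (k j * N))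
      refine ⟨Cj, hCjpos, fun η ξ => ?_⟩
      have hb : ∀ x, ‖sder α (Pi.single j (k j * N)) a x ξ‖
          ≤ Cj * Mw M ξ ^ (m - Mord M α + δ * max ((N:ℝ) - κ) 0) := by
        intro x
        have h := (hCj x ξ).1 (by rw [hMord j]; exact hNκ)
        rw [hMord j] at h
        exact h
      exact machine h𝒦 hGood α j (k j * N) ξ hb η
    choose Cj hCjpos hCjb using hper
    have hsumpos : (0:ℝ) ≤ ∑ j, Cj j := Finset.sum_nonneg fun j _ => (hCjpos j).le
    refine ⟨2 ^ N * (max 1 (volume 𝒦).toReal * C₀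
        + (n : ℝ) ^ N * (max 1 (volume 𝒦).toReal * ∑ j, Cj j)), by positivity,
      fun η ξ => ⟨fun _ => ?_, fun h => absurd h hNκ⟩⟩
    set T := ‖mder α (fun ζ => 𝓕 (fun x => a x ζ) η) ξ‖ with hTdef
    have hT0 : (0:ℝ) ≤ T := norm_nonneg _
    set W := Mw M ξ ^ (m - Mord M α + δ * max ((N:ℝ) - κ) 0) with hWdef
    have hW0 : (0:ℝ) ≤ W := by
      rw [hWdef]
      exact Real.rpow_nonneg (Mw_nonneg M ξ) _
    have hE0 : T ≤ max 1 (volume 𝒦).toReal * C₀ * W := by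
      have h1 : T ≤ max 1 (volume 𝒦).toReal * (C₀ * Mw M ξ ^ (m - Mord M α)) := by
        have h := machine h𝒦 hGood α (⟨0, hn⟩ : Fin n) 0 ξ (fun x => hC0bound x ξ) η
        simpa using h
      have h2 : Mw M ξ ^ (m - Mord M α) ≤ W := by
        rw [hWdef]
        refine Real.rpow_le_rpow_of_exponent_le (one_le_Mw M ξ) ?_
        have h3 : 0 ≤ δ * max ((N:ℝ) - κ) 0 := mul_nonneg hδ0 (le_max_right _ _)
        linarith
      calc T ≤ max 1 (volume 𝒦).toReal * (C₀ * Mw M ξ ^ (m - Mord M α)) := h1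
        _ ≤ max 1 (volume 𝒦).toReal * (C₀ * W) :=
            mul_le_mul_of_nonneg_left (mul_le_mul_of_nonneg_left h2 hC₀pos.le) hV0.le
        _ = max 1 (volume 𝒦).toReal * C₀ * W := by ring
    have hEj : ∀ j : Fin n, |η j| ^ (k j * N) * T
        ≤ max 1 (volume 𝒦).toReal * (Cj j * W) := fun j => hCjb j η ξ
    calc Mw M η ^ (N:ℝ) * T = Mw M η ^ N * T := by rw [Real.rpow_natCast]
      _ ≤ (2 ^ N * (1 + (n : ℝ) ^ N * ∑ j, |η j| ^ (k j * N))) * T :=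
          mul_le_mul_of_nonneg_right (Mw_pow_le hn M k hkM N η) hT0
      _ = 2 ^ N * (T + (n : ℝ) ^ N * ∑ j, (|η j| ^ (k j * N) * T)) := by
          rw [← Finset.sum_mul]; ring
      _ ≤ 2 ^ N * (max 1 (volume 𝒦).toReal * C₀ * W
          + (n : ℝ) ^ N * ∑ j, (max 1 (volume 𝒦).toReal * (Cj j * W))) := by
          refine mul_le_mul_of_nonneg_left ?_ (by positivity)
          exact add_le_add hE0 (mul_le_mul_of_nonneg_left
            (Finset.sum_le_sum fun j _ => hEj j) (by positivity))
      _ = 2 ^ N * (max 1 (volume 𝒦).toReal * C₀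
          + (n : ℝ) ^ N * (max 1 (volume 𝒦).toReal * ∑ j, Cj j)) * W := by
          have hsum2 : ∑ j, (max 1 (volume 𝒦).toReal * (Cj j * W))
              = max 1 (volume 𝒦).toReal * ((∑ j, Cj j) * W) := by
            rw [← Finset.mul_sum, ← Finset.sum_mul]
          rw [hsum2]
          ring

end FLpaper
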